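/- Consider the immersion-and-invariance estimator P̂(t) = −(γ/2)C x₂(t)² + P_I(t), with Ṗ_I = γ x₁ x₂ (1−u) + (γ²/2)C x₂² − γ P_I, where x₁, x₂ evolve according to L ẋ₁ = −(1−u)x₂ + uE, C ẋ₂ = (1−u)x₁ − P/x₂. Then the estimation error P̃ := P̂ − P satisfies the linear ODE P̃' = −γ P̃, so P̃(t) = P̃(0)·e^{−γt} and P̂(t) → P exponentially as t → ∞, for any measurable control signal u(t) ∈ [0,1]. -/

import Mathlib

/-! Along the `x₂`-dynamics the term `−(γ/2)Cx₂²` of `P̂` changes at rate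
`−γ(1−u)x₁x₂ + γP`; the injection `γx₁x₂(1−u)` in `Ṗ_I` cancels the first part, and
the remaining terms of `Ṗ_I` give `−γ(P̂ − P)`. The error thus solves `ẏ = −γy`, and `y·e^{γt}`
has zero derivative. -/

open Real Filter Topology

theorem eq_mul_exp_of_hasDerivAt_const_mul {f : ℝ → ℝ} {k : ℝ}
    (hf : ∀ t, HasDerivAt f (k * f t) t) (t : ℝ) : f t = f 0 * exp (k * t) := by
  have hdamped : ∀ s, HasDerivAt (fun s => f s * exp (-k * s)) 0 s := fun s => by
    have hexp := ((hasDerivAt_id s).const_mul (-k)).exp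
    refine ((hf s).mul hexp).congr_deriv ?_
    ring
  have hconst : f t * exp (-k * t) = f 0 * exp (-k * 0) :=
    is_const_of_deriv_eq_zero (fun s => (hdamped s).differentiableAt)
      (fun s => (hdamped s).deriv) t 0
  calc f t = f t * exp (-k * t) * exp (k * t) := by
        rw [mul_assoc, ← exp_add, neg_mul, neg_add_cancel, exp_zero, mul_one]
    _ = f 0 * exp (k * t) := by rw [hconst, mul_zero, exp_zero, mul_one]

theorem tendsto_const_mul_exp_neg_mul_atTop (c : ℝ) {γ : ℝ} (hγ : 0 < γ) :
    Tendsto (fun t => c * exp (-γ * t)) atTop (𝓝 0) := by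
  have hexp : Tendsto (fun t => exp (-γ * t)) atTop (𝓝 0) :=
    tendsto_exp_atBot.comp (tendsto_id.const_mul_atTop_of_neg (neg_neg_of_pos hγ))
  simpa using hexp.const_mul c

theorem hasDerivAt_estimator_error {C P γ t x1 u : ℝ} {x2 PI : ℝ → ℝ}
    (hC : C ≠ 0) (hx2 : x2 t ≠ 0)
    (hx2' : HasDerivAt x2 (((1 - u) * x1 - P / x2 t) / C) t)
    (hPI' : HasDerivAt PI (γ * x1 * x2 t * (1 - u) + γ ^ 2 / 2 * C * x2 t ^ 2 - γ * PI t) t) :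
    HasDerivAt (fun s => -(γ / 2) * C * x2 s ^ 2 + PI s - P)
      (-γ * (-(γ / 2) * C * x2 t ^ 2 + PI t - P)) t := by
  refine ((((hx2'.pow 2).const_mul (-(γ / 2) * C)).add hPI').sub_const P).congr_deriv ?_
  field_simp
  ring

theorem II_estimator_exponential_convergence_general
    (C P γ : ℝ) (hC : 0 < C)
    (hγ : 0 < γ)
    (x1 x2 PI u : ℝ → ℝ)
    (hx2pos : ∀ t, 0 < x2 t)
    (hx2' : ∀ t, HasDerivAt x2 (((1 - u t) * x1 t - P / x2 t) / C) t)
    (hPI' : ∀ t, HasDerivAt PI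
      (γ * x1 t * x2 t * (1 - u t) + γ ^ 2 / 2 * C * (x2 t) ^ 2 - γ * PI t) t) :
    let Phat : ℝ → ℝ := fun t => -(γ / 2) * C * (x2 t) ^ 2 + PI t
    (∀ t : ℝ, HasDerivAt (fun s => Phat s - P) (-γ * (Phat t - P)) t) ∧
    (∀ t : ℝ, 0 ≤ t → Phat t - P = (Phat 0 - P) * Real.exp (-γ * t)) ∧
    Tendsto Phat atTop (nhds P) := by
  intro Phat
  have herr : ∀ t, HasDerivAt (fun s => Phat s - P) (-γ * (Phat t - P)) t := fun t =>
    hasDerivAt_estimator_error hC.ne' (hx2pos t).ne' (hx2' t) (hPI' t)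
  have hsol : ∀ t, Phat t - P = (Phat 0 - P) * exp (-γ * t) :=
    eq_mul_exp_of_hasDerivAt_const_mul herr
  refine ⟨herr, fun t _ => hsol t, ?_⟩
  have hlim := (tendsto_const_mul_exp_neg_mul_atTop (Phat 0 - P) hγ).const_add P
  rw [add_zero] at hlim
  exact hlim.congr fun t => by rw [← hsol t]; ring

/-- the I&I estimator `P̂ = −(γ/2)Cx₂² + P_I` with
`Ṗ_I = γx₁x₂(1−u) + (γ²/2)Cx₂² − γP_I`, along the converter dynamics, yields the
error equation `P̃' = −γP̃`, hence `P̃(t) = P̃(0)e^{−γt}` and `P̂(t) → P`. -/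
theorem II_estimator_exponential_convergence
    (L C E P γ : ℝ) (hL : 0 < L) (hC : 0 < C) (hE : 0 < E) (hP : 0 < P)
    (hγ : 0 < γ)
    (x1 x2 PI u : ℝ → ℝ)
    (hu : ∀ t, u t ∈ Set.Icc (0 : ℝ) 1)
    (hx2pos : ∀ t, 0 < x2 t)
    (hx1' : ∀ t, HasDerivAt x1 ((-(1 - u t) * x2 t + u t * E) / L) t)
    (hx2' : ∀ t, HasDerivAt x2 (((1 - u t) * x1 t - P / x2 t) / C) t)
    (hPI' : ∀ t, HasDerivAt PI
      (γ * x1 t * x2 t * (1 - u t) + γ ^ 2 / 2 * C * (x2 t) ^ 2 - γ * PI t) t) :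
    let Phat : ℝ → ℝ := fun t => -(γ / 2) * C * (x2 t) ^ 2 + PI t
    (∀ t : ℝ, HasDerivAt (fun s => Phat s - P) (-γ * (Phat t - P)) t) ∧
    (∀ t : ℝ, 0 ≤ t → Phat t - P = (Phat 0 - P) * Real.exp (-γ * t)) ∧
    Tendsto Phat atTop (nhds P) :=
  II_estimator_exponential_convergence_general C P γ hC hγ x1 x2 PI u hx2pos hx2' hPI'
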